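/- Per-slot revenue bound from the proof of Lemma 3.1 (combining inequalities (2) and (3)): Let α, β, μ, ν ≥ 0 with β + ν > 0, let S and T be finite sets of bidders with |S| = |T|, and for each bidder i let v_i ≥ 0 and z_i satisfy μ·v_i ≤ z_i < ν·v_i. Suppose B ∈ ℝ satisfies B ≥ α·v_i + z_i for every i ∈ T \ S. Then Σ_{i ∈ S\T} max(B − z_i, β·v_i) ≥ ((α+μ)·β/(β+ν))·Σ_{i ∈ T\S} v_i. -/

import Mathlib

open Finset
open scoped Classical

/-- The `k`-th highest element (1-indexed) of a list of reals; `0` if out of range. -/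
noncomputable def kthHighest (l : List ℝ) (k : ℕ) : ℝ :=
  (l.insertionSort (· ≥ ·)).getD (k - 1) 0

/-- A position auction instance with `n` bidders and `m` auctions: auction `j` has
`s j` slots, position normalizers `pos j 1 ≥ ⋯ ≥ pos j (s j) > 0` (and `pos j k = 0`
for `k > s j`, in particular `pos j (s j + 1) = 0`), and nonnegative base values `v i j`. -/
structure PosAuction (n m : ℕ) where
  s : Fin m → ℕ
  pos : Fin m → ℕ → ℝ
  v : Fin n → Fin m → ℝ
  pos_pos : ∀ j k, 1 ≤ k → k ≤ s j → 0 < pos j k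
  pos_anti : ∀ j k, 1 ≤ k → k < s j → pos j (k + 1) ≤ pos j k
  pos_top : ∀ j k, s j < k → pos j k = 0
  v_nonneg : ∀ i j, 0 ≤ v i j

namespace PosAuction

variable {n m : ℕ}

/-- Bidder `i`'s value ranks among the top `s j` values of auction `j`
(ties broken by bidder index). -/
def InTop (A : PosAuction n m) (i : Fin n) (j : Fin m) : Prop :=
  (((univ : Finset (Fin n)).filter fun i' =>
    A.v i j < A.v i' j ∨ (A.v i' j = A.v i j ∧ i' < i)).card) < A.s j

/-- The score of bidder `i` in auction `j` given bids `b` and boosts `z`. -/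
def score (b z : Fin n → Fin m → ℝ) (i : Fin n) (j : Fin m) : ℝ := b i j + z i j

/-- The 1-indexed rank of bidder `i` in auction `j` when bidders are ordered by
score descending, ties broken by bidder index. -/
noncomputable def scoreRank (b z : Fin n → Fin m → ℝ) (j : Fin m) (i : Fin n) : ℕ :=
  1 + (((univ : Finset (Fin n)).filter fun i' =>
    score b z i j < score b z i' j ∨ (score b z i' j = score b z i j ∧ i' < i)).card)

/-- The `k`-th highest score in auction `j`, with the convention that it is `0`
beyond slot `s j` (in particular `bhat j (s j + 1) = 0`). -/
noncomputable def bhat (A : PosAuction n m) (b z : Fin n → Fin m → ℝ)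
    (j : Fin m) (k : ℕ) : ℝ :=
  if k ≤ A.s j then kthHighest (List.ofFn fun i => score b z i j) k else 0

/-- Lazy allocation rule: bidders are ranked by score, and the bidder with the `k`-th
highest score wins slot `k` of auction `j` (for `1 ≤ k ≤ s j`) provided her bid clears
her reserve. -/
noncomputable def allocOf (A : PosAuction n m) (b r z : Fin n → Fin m → ℝ)
    (j : Fin m) (k : ℕ) : Option (Fin n) :=
  if h : ∃ i : Fin n, scoreRank b z j i = k ∧ r i j ≤ b i j ∧ 1 ≤ k ∧ k ≤ A.s j
  then some h.choose else none

/-- Total value received by bidder `i` under allocation `alloc`. -/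
noncomputable def weli (A : PosAuction n m) (alloc : Fin m → ℕ → Option (Fin n))
    (i : Fin n) : ℝ :=
  ∑ j, ∑ k ∈ Icc 1 (A.s j), if alloc j k = some i then A.v i j * A.pos j k else 0

/-- Total welfare of allocation `alloc`. -/
noncomputable def wel (A : PosAuction n m) (alloc : Fin m → ℕ → Option (Fin n)) : ℝ :=
  ∑ i, A.weli alloc i

/-- The optimal welfare: in each auction the `k`-th slot is matched with the `k`-th
highest value. -/
noncomputable def welOPT (A : PosAuction n m) : ℝ :=
  ∑ j, ∑ k ∈ Icc 1 (A.s j), A.pos j k * kthHighest (List.ofFn fun i => A.v i j) k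

/-- VCG payment of bidder `i` in auction `j` (with reserves `r` and boosts `z`). -/
noncomputable def vcgPay (A : PosAuction n m) (b r z : Fin n → Fin m → ℝ)
    (i : Fin n) (j : Fin m) : ℝ :=
  if allocOf A b r z j (scoreRank b z j i) = some i then
    ∑ κ ∈ Icc (scoreRank b z j i + 1) (A.s j + 1),
      (A.pos j (κ - 1) - A.pos j κ) * max (A.bhat b z j κ - z i j) (r i j)
  else 0

/-- GSP payment of bidder `i` in auction `j` (with reserves `r` and boosts `z`). -/
noncomputable def gspPay (A : PosAuction n m) (b r z : Fin n → Fin m → ℝ)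
    (i : Fin n) (j : Fin m) : ℝ :=
  if allocOf A b r z j (scoreRank b z j i) = some i then
    max (A.bhat b z j (scoreRank b z j i + 1) - z i j) (r i j) * A.pos j (scoreRank b z j i)
  else 0

/-- First-price payment of bidder `i` in auction `j`. -/
noncomputable def fpaPay (A : PosAuction n m) (b r z : Fin n → Fin m → ℝ)
    (i : Fin n) (j : Fin m) : ℝ :=
  if allocOf A b r z j (scoreRank b z j i) = some i then
    b i j * A.pos j (scoreRank b z j i)
  else 0

/-- Total VCG payment of bidder `i` for a bid profile. -/
noncomputable def vcgPayT (A : PosAuction n m) (r z : Fin n → Fin m → ℝ) :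
    (Fin n → Fin m → ℝ) → Fin n → ℝ :=
  fun b i => ∑ j, A.vcgPay b r z i j

/-- Total GSP payment of bidder `i` for a bid profile. -/
noncomputable def gspPayT (A : PosAuction n m) (r z : Fin n → Fin m → ℝ) :
    (Fin n → Fin m → ℝ) → Fin n → ℝ :=
  fun b i => ∑ j, A.gspPay b r z i j

/-- Total first-price payment of bidder `i` for a bid profile. -/
noncomputable def fpaPayT (A : PosAuction n m) (r z : Fin n → Fin m → ℝ) :
    (Fin n → Fin m → ℝ) → Fin n → ℝ :=
  fun b i => ∑ j, A.fpaPay b r z i j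

/-- Total value received by bidder `i` under the (lazy, score-ranked) allocation
induced by the bid profile `b`. -/
noncomputable def WelI (A : PosAuction n m) (r z : Fin n → Fin m → ℝ)
    (b : Fin n → Fin m → ℝ) (i : Fin n) : ℝ :=
  A.weli (allocOf A b r z) i

/-- One step of the weak-dominance comparison between outcomes `(W, P)` (for the old
bid) and `(W', P')` (for the new bid): either both violate the ROS constraint, or the
old violates while the new satisfies it, or both satisfy it and the new constrained
objective is at least as large. -/
def WeakStep (lam W P W' P' : ℝ) : Prop :=
  (W < P ∧ W' < P') ∨ (W < P ∧ P' ≤ W') ∨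
    (P ≤ W ∧ P' ≤ W' ∧ W - lam * P ≤ W' - lam * P')

/-- The strict part of the dominance comparison: the old bid violates the ROS
constraint while the new satisfies it, or both satisfy it and the new constrained
objective is strictly larger. -/
def StrictStep (lam W P W' P' : ℝ) : Prop :=
  (W < P ∧ P' ≤ W') ∨ (P ≤ W ∧ P' ≤ W' ∧ W - lam * P < W' - lam * P')

/-- `bi'` weakly dominates `bi` for bidder `i` with behaviour parameter `lam`, for the
mechanism with allocation `allocOf` (reserves `r`, boosts `z`) and total payment rule
`PayT`: `bi'` is at least as good against every profile of competing bids, and strictly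
better against some profile of competing bids. -/
def Dominates (A : PosAuction n m) (r z : Fin n → Fin m → ℝ)
    (PayT : (Fin n → Fin m → ℝ) → Fin n → ℝ) (lam : ℝ)
    (i : Fin n) (bi' bi : Fin m → ℝ) : Prop :=
  (∀ bo : Fin n → Fin m → ℝ,
      WeakStep lam
        (A.WelI r z (Function.update bo i bi) i) (PayT (Function.update bo i bi) i)
        (A.WelI r z (Function.update bo i bi') i) (PayT (Function.update bo i bi') i)) ∧
  (∃ bo : Fin n → Fin m → ℝ,
      StrictStep lam
        (A.WelI r z (Function.update bo i bi) i) (PayT (Function.update bo i bi) i)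
        (A.WelI r z (Function.update bo i bi') i) (PayT (Function.update bo i bi') i))

/-- The set `Θ` of undominated bid profiles: every bidder's bid vector is undominated,
and every bidder's total payment is at most her total received value. -/
def InTheta (A : PosAuction n m) (r z : Fin n → Fin m → ℝ)
    (PayT : (Fin n → Fin m → ℝ) → Fin n → ℝ) (lam : Fin n → ℝ)
    (b : Fin n → Fin m → ℝ) : Prop :=
  (∀ i, ¬ ∃ bi' : Fin m → ℝ, A.Dominates r z PayT (lam i) i bi' (b i)) ∧
  (∀ i, PayT b i ≤ A.WelI r z b i)

/-- A uniform bid vector for bidder `i`: all bids are a common multiple of the values. -/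
def IsUniform (A : PosAuction n m) (i : Fin n) (bi : Fin m → ℝ) : Prop :=
  ∃ δ : ℝ, 0 ≤ δ ∧ ∀ j, bi j = δ * A.v i j

/-- The set `Θ_u` of undominated uniform bid profiles: every bidder bids uniformly,
no bidder's bid vector is dominated by another uniform bid vector, and every bidder's
total payment is at most her total received value. -/
def InThetaU (A : PosAuction n m) (r z : Fin n → Fin m → ℝ)
    (PayT : (Fin n → Fin m → ℝ) → Fin n → ℝ) (lam : Fin n → ℝ)
    (b : Fin n → Fin m → ℝ) : Prop :=
  (∀ i, A.IsUniform i (b i)) ∧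
  (∀ i, ¬ ∃ bi' : Fin m → ℝ, A.IsUniform i bi' ∧ A.Dominates r z PayT (lam i) i bi' (b i)) ∧
  (∀ i, PayT b i ≤ A.WelI r z b i)

end PosAuction

/-! Each bidder of `T \ S` has `(α + μ) v ≤ α v + z ≤ B`, while each term over `S \ T` is at
least `β B / (β + ν)`, the `(β, ν)`-weighted average of `B - z` and `β v` being at least that
much since `z ≤ ν v`. The two differences have the same size, so summing compares the sides. -/

lemma mul_div_add_le_max_sub {β ν B v z : ℝ} (hβ : 0 ≤ β) (hν : 0 ≤ ν) (hβν : 0 < β + ν)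
    (hz : z ≤ ν * v) :
    β * B / (β + ν) ≤ max (B - z) (β * v) := by
  rw [div_le_iff₀ hβν]
  have hleft : β * (B - z) ≤ β * max (B - z) (β * v) :=
    mul_le_mul_of_nonneg_left (le_max_left _ _) hβ
  have hright : ν * (β * v) ≤ ν * max (B - z) (β * v) :=
    mul_le_mul_of_nonneg_left (le_max_right _ _) hν
  have hboost : β * z ≤ β * (ν * v) := mul_le_mul_of_nonneg_left hz hβ
  linarith

theorem per_slot_revenue_bound_general {ι : Type*} [DecidableEq ι]
    (α β μ ν : ℝ) (hβ : 0 ≤ β) (hν : 0 ≤ ν)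
    (hβν : 0 < β + ν)
    (S T : Finset ι) (hST : S.card = T.card)
    (v z : ι → ℝ)
    (hz : ∀ i, μ * v i ≤ z i ∧ z i < ν * v i)
    (B : ℝ) (hB : ∀ i ∈ T \ S, α * v i + z i ≤ B) :
    (α + μ) * β / (β + ν) * ∑ i ∈ T \ S, v i ≤
      ∑ i ∈ S \ T, max (B - z i) (β * v i) := by
  have hT : (α + μ) * ∑ i ∈ T \ S, v i ≤ #(T \ S) • B := by
    rw [mul_sum]
    exact sum_le_card_nsmul _ _ _ fun i hi => by linarith [hB i hi, (hz i).1]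
  have hS : #(S \ T) • (β * B / (β + ν)) ≤ ∑ i ∈ S \ T, max (B - z i) (β * v i) :=
    card_nsmul_le_sum _ _ _ fun i _ => mul_div_add_le_max_sub hβ hν hβν (hz i).2.le
  calc (α + μ) * β / (β + ν) * ∑ i ∈ T \ S, v i
      = β / (β + ν) * ((α + μ) * ∑ i ∈ T \ S, v i) := by ring
    _ ≤ β / (β + ν) * (#(T \ S) • B) :=
        mul_le_mul_of_nonneg_left hT (div_nonneg hβ hβν.le)
    _ = #(S \ T) • (β * B / (β + ν)) := by
        rw [card_sdiff_comm hST, nsmul_eq_mul, nsmul_eq_mul]; ring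
    _ ≤ _ := hS

/-- Per-slot revenue bound from the proof of Lemma 3.1 (combining inequalities (2)
and (3)). -/
theorem per_slot_revenue_bound {ι : Type*} [DecidableEq ι]
    (α β μ ν : ℝ) (hα : 0 ≤ α) (hβ : 0 ≤ β) (hμ : 0 ≤ μ) (hν : 0 ≤ ν)
    (hβν : 0 < β + ν)
    (S T : Finset ι) (hST : S.card = T.card)
    (v z : ι → ℝ) (hv : ∀ i, 0 ≤ v i)
    (hz : ∀ i, μ * v i ≤ z i ∧ z i < ν * v i)
    (B : ℝ) (hB : ∀ i ∈ T \ S, α * v i + z i ≤ B) :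
    (α + μ) * β / (β + ν) * ∑ i ∈ T \ S, v i ≤
      ∑ i ∈ S \ T, max (B - z i) (β * v i) :=
  per_slot_revenue_bound_general α β μ ν hβ hν hβν S T hST v z hz B hB
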